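/- Let A be a commutative (not necessarily associative) algebra over ℂ. For x ∈ A let L_x : A → A denote the multiplication operator L_x(z) = x·z. Then the commutator [L_x, L_y] = L_x ∘ L_y − L_y ∘ L_x is a derivation of A for all x, y ∈ A if and only if A satisfies the almost-Jordan identity 2·(((y·x)·x)·x) + y·((x·x)·x) = 3·((y·(x·x))·x) for all x, y ∈ A. (That is, a commutative algebra over ℂ is a CD-algebra if and only if it is an almost-Jordan algebra.) -/

import Mathlib

/-!
Putting `a = b = x` in the CD identity for `[L_x, L_y]` gives, after commuting factors, the
almost-Jordan identity. Conversely, the almost-Jordan identity is cubic in `x`; the difference of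
its full linearizations at `(x; y, a, b)` and `(y; x, a, b)` is, modulo commutativity, eight times
the CD identity for `[L_x, L_y]` on `a · b`, so this direction needs only that `2` is invertible.
-/

namespace LinearMap

variable {R V : Type*} [CommRing R] [AddCommGroup V] [Module R V] (m : V →ₗ[R] V →ₗ[R] V)

def IsDerivation (D : Module.End R V) : Prop :=
  ∀ a b, D (m a b) = m (D a) b + m a (D b)

def IsCD : Prop :=
  ∀ x y, IsDerivation m ⁅m x, m y⁆

def IsAlmostJordan : Prop :=
  ∀ x y, (2 : R) • m (m (m y x) x) x + m y (m (m x x) x) = (3 : R) • m (m y (m x x)) x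

variable {m}

theorem IsCD.isAlmostJordan (hcomm : ∀ x y, m x y = m y x) (h : IsCD m) :
    IsAlmostJordan m := by
  intro x y
  have hxx := h x y x x
  -- `simp` uses the permutation lemma `hcomm` as an ordered rewrite, so every product is put
  -- into one canonical order and both sides become comparable by `linear_combination`.
  simp only [Ring.lie_def, Module.End.mul_apply, sub_apply, map_sub, hcomm] at hxx ⊢
  linear_combination (norm := module) -hxx

theorem IsAlmostJordan.linearized (h : IsAlmostJordan m) (y a b c : V) :
    (2 : R) • (m (m (m y a) b) c + m (m (m y a) c) b + m (m (m y b) a) c + m (m (m y b) c) a +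
        m (m (m y c) a) b + m (m (m y c) b) a) +
      (m y (m (m a b) c) + m y (m (m a c) b) + m y (m (m b a) c) + m y (m (m b c) a) +
        m y (m (m c a) b) + m y (m (m c b) a)) =
    (3 : R) • (m (m y (m a b)) c + m (m y (m a c)) b + m (m y (m b a)) c + m (m y (m b c)) a +
        m (m y (m c a)) b + m (m y (m c b)) a) := by
  have habc := h (a + b + c) y
  have hab := h (a + b) y
  have hac := h (a + c) y
  have hbc := h (b + c) y
  simp only [map_add, add_apply] at habc hab hac hbc
  -- inclusion–exclusion over the subsets of `{a, b, c}` keeps exactly the part linear in each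
  linear_combination (norm := module) habc - hab - hac - hbc + h a y + h b y + h c y

theorem IsAlmostJordan.eight_smul_lie_apply_mul (hcomm : ∀ x y, m x y = m y x)
    (h : IsAlmostJordan m) (x y a b : V) :
    (8 : R) • ⁅m x, m y⁆ (m a b) = (8 : R) • (m (⁅m x, m y⁆ a) b + m a (⁅m x, m y⁆ b)) := by
  have hx := h.linearized x y a b
  have hy := h.linearized y x a b
  simp only [Ring.lie_def, Module.End.mul_apply, sub_apply, map_sub, hcomm] at hx hy ⊢
  linear_combination (norm := module) hx - hy

theorem IsAlmostJordan.isCD (hcomm : ∀ x y, m x y = m y x) (h2 : IsUnit (2 : R))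
    (h : IsAlmostJordan m) : IsCD m := by
  have h8 : IsUnit (8 : R) := by convert h2.pow 3; norm_num
  exact fun x y a b => h8.smul_left_cancel.mp (h.eight_smul_lie_apply_mul hcomm x y a b)

theorem isCD_iff_isAlmostJordan (hcomm : ∀ x y, m x y = m y x) (h2 : IsUnit (2 : R)) :
    IsCD m ↔ IsAlmostJordan m :=
  ⟨IsCD.isAlmostJordan hcomm, IsAlmostJordan.isCD hcomm h2⟩

end LinearMap

theorem commutator_of_mul_ops_is_derivation_iff_almost_jordan
    {V : Type*} [AddCommGroup V] [Module ℂ V]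
    (m : V →ₗ[ℂ] V →ₗ[ℂ] V) (hcomm : ∀ x y : V, m x y = m y x) :
    (∀ x y a b : V,
        m x (m y (m a b)) - m y (m x (m a b)) =
          m (m x (m y a) - m y (m x a)) b + m a (m x (m y b) - m y (m x b))) ↔
      (∀ x y : V,
        (2 : ℂ) • m (m (m y x) x) x + m y (m (m x x) x) =
          (3 : ℂ) • m (m y (m x x)) x) :=
  LinearMap.isCD_iff_isAlmostJordan hcomm two_ne_zero.isUnit
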